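/- (Transient lemma) Let H ∈ F_𝐇 be the fully-packed configuration consisting of all horizontal edges and no vertical edges. If (A,u,u) ∈ 𝒮 with d_u(A) = 2 and A ≠ H, then there exists a vacant horizontal edge vv' (i.e. a horizontal edge vv' ∉ A) such that (A,u,u) → (A,v,v). -/

import Mathlib

attribute [local instance] Classical.propDecidable

namespace FPL

/-- Vertices of the brick-wall honeycomb lattice with periodic boundary conditions. -/
abbrev Vtx (m n : ℕ) := ZMod m × ZMod n

/-- Adjacency on the brick-wall honeycomb lattice: horizontal edges between `(i,j)` and
`(i+1,j)`, and vertical edges between `(i,j)` and `(i,j+1)` whenever `i+j` is even. -/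
def HoneyAdj (m n : ℕ) (x y : Vtx m n) : Prop :=
  (x.2 = y.2 ∧ (y.1 = x.1 + 1 ∨ x.1 = y.1 + 1)) ∨
  (x.1 = y.1 ∧ ((y.2 = x.2 + 1 ∧ Even (x.1.val + x.2.val)) ∨
                (x.2 = y.2 + 1 ∧ Even (y.1.val + y.2.val))))

variable (m n : ℕ) [NeZero m] [NeZero n]

/-- The edge set of the brick-wall honeycomb lattice. -/
noncomputable def honeyEdges : Finset (Sym2 (Vtx m n)) :=
  Finset.image (fun p : Vtx m n × Vtx m n => s(p.1, p.2))
    (Finset.univ.filter fun p => HoneyAdj m n p.1 p.2)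

/-- `bdeg m n A x` is the degree of the vertex `x` in the spanning subgraph `(V, A)`. -/
noncomputable def bdeg (A : Finset (Sym2 (Vtx m n))) (x : Vtx m n) : ℕ :=
  (A.filter fun e => x ∈ e).card

/-- `(A,u,v)` is a state of the worm chain: `A ⊆ E`, and the set of odd-degree vertices of
`(V,A)` is `{u,v}` if `u ≠ v`, and is empty if `u = v`. -/
def IsWormState (A : Finset (Sym2 (Vtx m n))) (u v : Vtx m n) : Prop :=
  A ⊆ honeyEdges m n ∧ ∀ x, (Odd (bdeg m n A x) ↔ ((x = u ∨ x = v) ∧ u ≠ v))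

/-- The worm state space `𝒮`. -/
abbrev WormState := {p : Finset (Sym2 (Vtx m n)) × Vtx m n × Vtx m n //
  IsWormState m n p.1 p.2.1 p.2.2}

/-- The set `ℛ` of states with no isolated vertices. -/
def FullSupport (st : WormState m n) : Prop := ∀ x : Vtx m n, bdeg m n st.1.1 x ≠ 0

/-- The fully-packed worm transition matrix `P'_∞`. -/
noncomputable def Pinf : Matrix (WormState m n) (WormState m n) ℝ := fun st tt =>
  if st.1.2.1 = st.1.2.2 then
    (if tt = st then (bdeg m n st.1.1 st.1.2.2 : ℝ) / 3 else 0) +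
    (if ∃ v' : Vtx m n, HoneyAdj m n st.1.2.2 v' ∧ s(st.1.2.2, v') ∉ st.1.1 ∧
        tt.1.1 = insert s(st.1.2.2, v') st.1.1 ∧
        ((tt.1.2.1 = v' ∧ tt.1.2.2 = st.1.2.2) ∨ (tt.1.2.1 = st.1.2.2 ∧ tt.1.2.2 = v'))
      then 1/6 else 0)
  else
    (if bdeg m n st.1.1 st.1.2.1 = 3 ∧ ∃ u' : Vtx m n, HoneyAdj m n st.1.2.1 u' ∧
        s(st.1.2.1, u') ∈ st.1.1 ∧ tt.1.1 = st.1.1.erase s(st.1.2.1, u') ∧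
        tt.1.2.1 = u' ∧ tt.1.2.2 = st.1.2.2 then 1/6 else 0) +
    (if bdeg m n st.1.1 st.1.2.1 = 1 ∧ ∃ u' : Vtx m n, HoneyAdj m n st.1.2.1 u' ∧
        s(st.1.2.1, u') ∉ st.1.1 ∧ tt.1.1 = insert s(st.1.2.1, u') st.1.1 ∧
        tt.1.2.1 = u' ∧ tt.1.2.2 = st.1.2.2 then 1/4 else 0) +
    (if bdeg m n st.1.1 st.1.2.2 = 3 ∧ ∃ v' : Vtx m n, HoneyAdj m n st.1.2.2 v' ∧
        s(st.1.2.2, v') ∈ st.1.1 ∧ tt.1.1 = st.1.1.erase s(st.1.2.2, v') ∧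
        tt.1.2.1 = st.1.2.1 ∧ tt.1.2.2 = v' then 1/6 else 0) +
    (if bdeg m n st.1.1 st.1.2.2 = 1 ∧ ∃ v' : Vtx m n, HoneyAdj m n st.1.2.2 v' ∧
        s(st.1.2.2, v') ∉ st.1.1 ∧ tt.1.1 = insert s(st.1.2.2, v') st.1.1 ∧
        tt.1.2.1 = st.1.2.1 ∧ tt.1.2.2 = v' then 1/4 else 0)

/-- `st → tt`: some power of `P'_∞` has positive `(st,tt)` entry. -/
def Reaches (st tt : WormState m n) : Prop := ∃ k : ℕ, 0 < (Pinf m n ^ k) st tt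

/-- `st ↔ tt`: mutual reachability. -/
def Comm (st tt : WormState m n) : Prop := Reaches m n st tt ∧ Reaches m n tt st

/-- The fully-packed configuration consisting of all horizontal edges. -/
noncomputable def Hconfig : Finset (Sym2 (Vtx m n)) :=
  Finset.image (fun p : Vtx m n => s(p, (p.1 + 1, p.2))) Finset.univ

end FPL

/-!
Suppose no merged state `(A, v, v)` reachable from `(A, u, u)` has a vacant right edge at `v`.
If `(A, x, x)` is reachable and `d_x(A) = 2`, the left edge at `x` is occupied as well (otherwise
the worm hops to the left neighbour, whose right edge is vacant), so the vertical edge at `x` is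
vacant. Hopping across it, the vertical neighbour `w` is reachable with degree `2`, so both
horizontal edges at `w` are occupied, and sliding the defects along `x → w → w ± (1, 0)` reaches
`x + (±1, δ)`, where `δ = ±1` is the vertical direction common to all vertices of the parity of
`u`. On the finite torus these two translations generate all of the even sublattice, so every
vertex of the parity of `u` carries both of its horizontal edges and not its vertical one. Every
edge has exactly one endpoint of that parity, hence `A = H`.
-/

theorem Matrix.pow_add_apply_pos {ι R : Type*} [Fintype ι] [DecidableEq ι] [Semiring R]
    [PartialOrder R] [IsStrictOrderedRing R] {M : Matrix ι ι R} (hM : ∀ i j, 0 ≤ M i j)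
    {k l : ℕ} {i j r : ι} (hk : 0 < (M ^ k) i j) (hl : 0 < (M ^ l) j r) :
    0 < (M ^ (k + l)) i r := by
  rw [pow_add, Matrix.mul_apply]
  exact (mul_pos hk hl).trans_le <| Finset.single_le_sum
    (fun c _ => mul_nonneg (Matrix.pow_apply_nonneg hM k i c) (Matrix.pow_apply_nonneg hM l c r))
    (Finset.mem_univ j)

theorem AddSubgroup.closure_induction_add_right_of_finite {G : Type*} [AddGroup G] [Finite G]
    {s : Set G} {P : G → Prop} (hP : ∀ x, P x → ∀ g ∈ s, P (x + g)) {x : G} (hx : P x) {g : G}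
    (hg : g ∈ AddSubgroup.closure s) : P (x + g) := by
  rw [← AddSubgroup.mem_toAddSubmonoid, AddSubgroup.closure_toAddSubmonoid_of_finite] at hg
  induction hg using AddSubmonoid.closure_induction_right with
  | zero => rwa [add_zero]
  | add_right y _ z hz ih => rw [← add_assoc]; exact hP _ ih z hz

theorem pos_ite_of {α : Type*} [Zero α] [LT α] {c : Prop} [Decidable c] {a b : α} (hc : c)
    (ha : 0 < a) : 0 < ite c a b := by
  rwa [if_pos hc]

namespace FPL

section Reachability

variable {m n : ℕ} [NeZero m] [NeZero n]

theorem Pinf_nonneg (s t : WormState m n) : 0 ≤ Pinf m n s t := by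
  unfold Pinf
  split_ifs <;> positivity

theorem Reaches.refl (s : WormState m n) : Reaches m n s s :=
  ⟨0, by simp⟩

theorem Reaches.trans {s t r : WormState m n} (hst : Reaches m n s t) (htr : Reaches m n t r) :
    Reaches m n s r :=
  let ⟨k, hk⟩ := hst
  let ⟨l, hl⟩ := htr
  ⟨k + l, Matrix.pow_add_apply_pos Pinf_nonneg hk hl⟩

theorem Reaches.of_Pinf_pos {s t : WormState m n} (h : 0 < Pinf m n s t) : Reaches m n s t :=
  ⟨1, by simpa using h⟩

end Reachability

section Degrees

variable {m n : ℕ} {A : Finset (Sym2 (Vtx m n))} {e : Sym2 (Vtx m n)}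

theorem bdeg_insert (he : e ∉ A) (x : Vtx m n) :
    bdeg m n (insert e A) x = bdeg m n A x + if x ∈ e then 1 else 0 := by
  unfold bdeg
  rw [Finset.filter_insert]
  split_ifs
  · exact Finset.card_insert_of_notMem fun h => he (Finset.mem_filter.1 h).1
  · rfl

theorem bdeg_erase (he : e ∈ A) (x : Vtx m n) :
    bdeg m n A x = bdeg m n (A.erase e) x + if x ∈ e then 1 else 0 := by
  conv_lhs => rw [← Finset.insert_erase he]
  exact bdeg_insert (Finset.notMem_erase e A) x

theorem odd_bdeg_insert (he : e ∉ A) (x : Vtx m n) :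
    Odd (bdeg m n (insert e A) x) ↔ (Odd (bdeg m n A x) ↔ x ∉ e) := by
  rw [bdeg_insert he]
  split_ifs with hx <;> simp [hx, Nat.odd_add_one]

theorem odd_bdeg_erase (he : e ∈ A) (x : Vtx m n) :
    Odd (bdeg m n (A.erase e) x) ↔ (Odd (bdeg m n A x) ↔ x ∉ e) := by
  rw [bdeg_erase he x]
  split_ifs with hx <;> simp [hx, Nat.odd_add_one]

end Degrees

section WormStates

variable {m n : ℕ} [NeZero m] [NeZero n] {A : Finset (Sym2 (Vtx m n))} {a b c : Vtx m n}

theorem mem_honeyEdges {x y : Vtx m n} (h : HoneyAdj m n x y) : s(x, y) ∈ honeyEdges m n :=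
  Finset.mem_image.2 ⟨(x, y), Finset.mem_filter.2 ⟨Finset.mem_univ _, h⟩, rfl⟩

theorem isWormState_of_val_eq {t : WormState m n} (ht : t.1 = (A, a, c)) :
    IsWormState m n A a c := by
  obtain ⟨_, h⟩ := t
  subst ht
  exact h

theorem IsWormState.symm (h : IsWormState m n A a b) : IsWormState m n A b a :=
  ⟨h.1, fun x => (h.2 x).trans (by rw [or_comm, ne_comm])⟩

theorem IsWormState.merged (h : IsWormState m n A a a) (x : Vtx m n) : IsWormState m n A x x :=
  ⟨h.1, fun y => by simpa using h.2 y⟩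

theorem IsWormState.toggle_fst {B : Finset (Sym2 (Vtx m n))} (h : IsWormState m n A a c)
    (hB : B ⊆ honeyEdges m n) (hab : a ≠ b)
    (hodd : ∀ x, Odd (bdeg m n B x) ↔ (Odd (bdeg m n A x) ↔ x ∉ s(a, b))) :
    IsWormState m n B b c := by
  refine ⟨hB, fun x => ?_⟩
  rw [hodd, h.2, Sym2.mem_iff]
  by_cases hxa : x = a <;> by_cases hxb : x = b <;> by_cases hxc : x = c <;>
    by_cases hac : a = c <;> by_cases hbc : b = c <;> simp_all

theorem IsWormState.insert_fst (h : IsWormState m n A a c) (hab : HoneyAdj m n a b)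
    (hne : a ≠ b) (he : s(a, b) ∉ A) : IsWormState m n (insert s(a, b) A) b c :=
  h.toggle_fst (Finset.insert_subset (mem_honeyEdges hab) h.1) hne (odd_bdeg_insert he)

theorem IsWormState.erase_fst (h : IsWormState m n A a c) (hne : a ≠ b) (he : s(a, b) ∈ A) :
    IsWormState m n (A.erase s(a, b)) b c :=
  h.toggle_fst ((Finset.erase_subset _ _).trans h.1) hne (odd_bdeg_erase he)

end WormStates

section Transitions

variable {m n : ℕ} [NeZero m] [NeZero n] {s : WormState m n} {A : Finset (Sym2 (Vtx m n))}
  {x y w : Vtx m n}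

theorem exists_reaches_merged_insert (hs : s.1 = (A, x, x)) (hxw : HoneyAdj m n x w)
    (hne : x ≠ w) (hw : s(x, w) ∉ A) :
    ∃ t : WormState m n, t.1 = (insert s(x, w) A, x, w) ∧ Reaches m n s t := by
  refine ⟨⟨_, ((isWormState_of_val_eq hs).insert_fst hxw hne hw).symm⟩, rfl,
    Reaches.of_Pinf_pos ?_⟩
  obtain ⟨⟨_, _, _⟩, _⟩ := s
  cases hs
  unfold Pinf
  rw [if_pos rfl]
  exact add_pos_of_nonneg_of_pos (by positivity)
    (pos_ite_of ⟨_, hxw, hw, rfl, Or.inr ⟨rfl, rfl⟩⟩ (by norm_num))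

theorem exists_reaches_erase_fst (hs : s.1 = (A, x, y)) (hxy : x ≠ y) (hx : bdeg m n A x = 3)
    (hxw : HoneyAdj m n x w) (hne : x ≠ w) (hw : s(x, w) ∈ A) :
    ∃ t : WormState m n, t.1 = (A.erase s(x, w), w, y) ∧ Reaches m n s t := by
  refine ⟨⟨_, (isWormState_of_val_eq hs).erase_fst hne hw⟩, rfl, Reaches.of_Pinf_pos ?_⟩
  obtain ⟨⟨_, _, _⟩, _⟩ := s
  cases hs
  unfold Pinf
  rw [if_neg hxy]
  exact add_pos_of_pos_of_nonneg (add_pos_of_pos_of_nonneg (add_pos_of_pos_of_nonneg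
    (pos_ite_of ⟨hx, _, hxw, hw, rfl, rfl, rfl⟩ (by norm_num)) (by positivity)) (by positivity))
    (by positivity)

theorem exists_reaches_insert_fst (hs : s.1 = (A, x, y)) (hxy : x ≠ y) (hx : bdeg m n A x = 1)
    (hxw : HoneyAdj m n x w) (hne : x ≠ w) (hw : s(x, w) ∉ A) :
    ∃ t : WormState m n, t.1 = (insert s(x, w) A, w, y) ∧ Reaches m n s t := by
  refine ⟨⟨_, (isWormState_of_val_eq hs).insert_fst hxw hne hw⟩, rfl, Reaches.of_Pinf_pos ?_⟩
  obtain ⟨⟨_, _, _⟩, _⟩ := s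
  cases hs
  unfold Pinf
  rw [if_neg hxy]
  exact add_pos_of_pos_of_nonneg (add_pos_of_pos_of_nonneg (add_pos_of_nonneg_of_pos
    (by positivity) (pos_ite_of ⟨hx, _, hxw, hw, rfl, rfl, rfl⟩ (by norm_num))) (by positivity))
    (by positivity)

theorem exists_reaches_erase_snd (hs : s.1 = (A, x, y)) (hxy : x ≠ y) (hy : bdeg m n A y = 3)
    (hyw : HoneyAdj m n y w) (hne : y ≠ w) (hw : s(y, w) ∈ A) :
    ∃ t : WormState m n, t.1 = (A.erase s(y, w), x, w) ∧ Reaches m n s t := by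
  refine ⟨⟨_, ((isWormState_of_val_eq hs).symm.erase_fst hne hw).symm⟩, rfl,
    Reaches.of_Pinf_pos ?_⟩
  obtain ⟨⟨_, _, _⟩, _⟩ := s
  cases hs
  unfold Pinf
  rw [if_neg hxy]
  exact add_pos_of_pos_of_nonneg (add_pos_of_nonneg_of_pos (by positivity)
    (pos_ite_of ⟨hy, _, hyw, hw, rfl, rfl, rfl⟩ (by norm_num))) (by positivity)

end Transitions

section Moves

variable {m n : ℕ} [NeZero m] [NeZero n] {s : WormState m n} {x w z : Vtx m n}

/-- The worm started at `s` can close up at `x` without changing the configuration of `s`. -/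
def ReachesMergedAt (s : WormState m n) (x : Vtx m n) : Prop :=
  ∃ t : WormState m n, t.1 = (s.1.1, x, x) ∧ Reaches m n s t

theorem reachesMergedAt_self {u : Vtx m n} (hs : s.1.2 = (u, u)) : ReachesMergedAt s u :=
  ⟨s, Prod.ext rfl hs, Reaches.refl s⟩

theorem ReachesMergedAt.hop (h : ReachesMergedAt s x) (hx : bdeg m n s.1.1 x = 2)
    (hxw : HoneyAdj m n x w) (hne : x ≠ w) (hw : s(x, w) ∉ s.1.1) : ReachesMergedAt s w := by
  obtain ⟨t, ht, hst⟩ := h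
  have hx₁ : bdeg m n (insert s(x, w) s.1.1) x = 3 := by
    rw [bdeg_insert hw, hx, if_pos (Sym2.mem_mk_left x w)]
  obtain ⟨t₁, ht₁, h₁⟩ := exists_reaches_merged_insert ht hxw hne hw
  obtain ⟨t₂, ht₂, h₂⟩ :=
    exists_reaches_erase_fst ht₁ hne hx₁ hxw hne (Finset.mem_insert_self _ _)
  rw [Finset.erase_insert hw] at ht₂
  exact ⟨t₂, ht₂, hst.trans (h₁.trans h₂)⟩

theorem ReachesMergedAt.slide (h : ReachesMergedAt s x) (hx : bdeg m n s.1.1 x = 2)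
    (hw : bdeg m n s.1.1 w = 2) (hxw : HoneyAdj m n x w) (hwz : HoneyAdj m n w z)
    (hxw_ne : x ≠ w) (hwz_ne : w ≠ z) (hxz_ne : x ≠ z) (hxw_vac : s(x, w) ∉ s.1.1)
    (hwz_occ : s(w, z) ∈ s.1.1) : ReachesMergedAt s z := by
  obtain ⟨t, ht, hst⟩ := h
  set A := s.1.1
  have hx_wz : x ∉ s(w, z) := by simp [hxw_ne, hxz_ne]
  have hxw_ne_wz : s(x, w) ≠ s(w, z) := fun h => hx_wz (h ▸ Sym2.mem_mk_left x w)
  have hwz_mem : s(w, z) ∈ insert s(x, w) A := Finset.mem_insert_of_mem hwz_occ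
  have hxw_mem : s(x, w) ∈ (insert s(x, w) A).erase s(w, z) :=
    Finset.mem_erase.2 ⟨hxw_ne_wz, Finset.mem_insert_self _ _⟩
  have hwz_vac : s(w, z) ∉ ((insert s(x, w) A).erase s(w, z)).erase s(x, w) :=
    fun h => Finset.notMem_erase _ _ (Finset.mem_of_mem_erase h)
  have hw₁ : bdeg m n (insert s(x, w) A) w = 3 := by
    rw [bdeg_insert hxw_vac, hw, if_pos (Sym2.mem_mk_right x w)]
  have hx₂ : bdeg m n ((insert s(x, w) A).erase s(w, z)) x = 3 := by
    have := bdeg_erase hwz_mem x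
    rw [if_neg hx_wz, bdeg_insert hxw_vac, hx, if_pos (Sym2.mem_mk_left x w)] at this
    exact this.symm
  have hw₃ : bdeg m n (((insert s(x, w) A).erase s(w, z)).erase s(x, w)) w = 1 := by
    have h₁ := bdeg_erase hwz_mem w
    have h₂ := bdeg_erase hxw_mem w
    rw [if_pos (Sym2.mem_mk_left w z)] at h₁
    rw [if_pos (Sym2.mem_mk_right x w)] at h₂
    omega
  obtain ⟨t₁, ht₁, h₁⟩ := exists_reaches_merged_insert ht hxw hxw_ne hxw_vac
  obtain ⟨t₂, ht₂, h₂⟩ := exists_reaches_erase_snd ht₁ hxw_ne hw₁ hwz hwz_ne hwz_mem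
  obtain ⟨t₃, ht₃, h₃⟩ := exists_reaches_erase_fst ht₂ hxz_ne hx₂ hxw hxw_ne hxw_mem
  obtain ⟨t₄, ht₄, h₄⟩ := exists_reaches_insert_fst ht₃ hwz_ne hw₃ hwz hwz_ne hwz_vac
  rw [Finset.erase_insert_of_ne hxw_ne_wz, Finset.erase_insert
    (fun h => hxw_vac (Finset.mem_of_mem_erase h)), Finset.insert_erase hwz_occ] at ht₄
  exact ⟨t₄, ht₄, hst.trans (h₁.trans (h₂.trans (h₃.trans h₄)))⟩

end Moves

section Lattice

variable {m n : ℕ}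

def rightNbr (x : Vtx m n) : Vtx m n := (x.1 + 1, x.2)

def leftNbr (x : Vtx m n) : Vtx m n := (x.1 - 1, x.2)

def parity (x : Vtx m n) : ZMod 2 := x.1.cast + x.2.cast

def vertDir (x : Vtx m n) : ZMod n := if parity x = 0 then 1 else -1

def vertNbr (x : Vtx m n) : Vtx m n := (x.1, x.2 + vertDir x)

theorem parity_add (hm : Even m) (hn : Even n) (x y : Vtx m n) :
    parity (x + y) = parity x + parity y := by
  simp only [parity, Prod.fst_add, Prod.snd_add, ZMod.cast_add hm.two_dvd,
    ZMod.cast_add hn.two_dvd]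
  ring

theorem parity_rightNbr (hm : Even m) (x : Vtx m n) : parity (rightNbr x) = parity x + 1 := by
  simp only [parity, rightNbr, ZMod.cast_add hm.two_dvd, ZMod.cast_one hm.two_dvd]
  ring

theorem parity_leftNbr (hm : Even m) (x : Vtx m n) : parity (leftNbr x) = parity x + 1 := by
  simp only [parity, leftNbr, ZMod.cast_sub hm.two_dvd, ZMod.cast_one hm.two_dvd,
    CharTwo.sub_eq_add]
  ring

theorem parity_vertNbr (hn : Even n) (x : Vtx m n) : parity (vertNbr x) = parity x + 1 := by
  unfold vertNbr vertDir
  split_ifs <;> simp only [parity, ZMod.cast_add hn.two_dvd, ZMod.cast_one hn.two_dvd,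
    ZMod.cast_neg hn.two_dvd, ZMod.neg_eq_self_mod_two, add_assoc]

theorem cast_vertDir (hn : Even n) (x : Vtx m n) : ((vertDir x).cast : ZMod 2) = 1 := by
  unfold vertDir
  split_ifs <;> simp [ZMod.cast_one hn.two_dvd, ZMod.cast_neg hn.two_dvd]

theorem vertDir_eq_one_or_neg_one (x : Vtx m n) : vertDir x = 1 ∨ vertDir x = -1 := by
  unfold vertDir
  split_ifs
  exacts [Or.inl rfl, Or.inr rfl]

theorem parity_eq_zero_iff [NeZero m] [NeZero n] (x : Vtx m n) :
    parity x = 0 ↔ Even (x.1.val + x.2.val) := by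
  rw [parity, ← ZMod.natCast_val, ← ZMod.natCast_val, ← Nat.cast_add,
    ZMod.natCast_eq_zero_iff_even]

end Lattice

section Adjacency

variable {m n : ℕ}

theorem parity_eq_zero_or_one (x : Vtx m n) : parity x = 0 ∨ parity x = 1 := by
  generalize parity x = p
  revert p
  decide

theorem vertNbr_of_parity_eq_zero {x : Vtx m n} (hx : parity x = 0) :
    vertNbr x = (x.1, x.2 + 1) := by
  simp [vertNbr, vertDir, hx]

theorem vertNbr_vertNbr (hn : Even n) (x : Vtx m n) : vertNbr (vertNbr x) = x := by
  have hdir : vertDir (vertNbr x) = -vertDir x := by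
    unfold vertDir
    rw [parity_vertNbr hn]
    rcases parity_eq_zero_or_one x with h | h <;> simp [h, show (1 + 1 : ZMod 2) = 0 from rfl]
  exact Prod.ext rfl (by rw [vertNbr, hdir, vertNbr, add_neg_cancel_right])

theorem honeyAdj_rightNbr (x : Vtx m n) : HoneyAdj m n x (rightNbr x) :=
  Or.inl ⟨rfl, Or.inl rfl⟩

theorem honeyAdj_leftNbr (x : Vtx m n) : HoneyAdj m n x (leftNbr x) :=
  Or.inl ⟨rfl, Or.inr (sub_add_cancel _ _).symm⟩

theorem honeyAdj_comm {a b : Vtx m n} : HoneyAdj m n a b ↔ HoneyAdj m n b a := by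
  unfold HoneyAdj
  tauto

variable [NeZero m] [NeZero n]

theorem honeyAdj_iff (hn : Even n) {a b : Vtx m n} :
    HoneyAdj m n a b ↔ b = rightNbr a ∨ b = leftNbr a ∨ b = vertNbr a := by
  simp only [HoneyAdj, ← parity_eq_zero_iff]
  constructor
  · rintro (⟨h2, h1 | h1⟩ | ⟨h1, ⟨h2, ha⟩ | ⟨h2, hb⟩⟩)
    · exact Or.inl (Prod.ext h1 h2.symm)
    · exact Or.inr <| Or.inl <| Prod.ext (by rw [leftNbr, h1]; ring) h2.symm
    · exact Or.inr <| Or.inr <| by rw [vertNbr_of_parity_eq_zero ha]; exact Prod.ext h1.symm h2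
    · refine Or.inr <| Or.inr ?_
      rw [show a = vertNbr b by rw [vertNbr_of_parity_eq_zero hb]; exact Prod.ext h1 h2,
        vertNbr_vertNbr hn]
  · rintro (rfl | rfl | rfl)
    · exact Or.inl ⟨rfl, Or.inl rfl⟩
    · exact Or.inl ⟨rfl, Or.inr (sub_add_cancel _ _).symm⟩
    · rcases parity_eq_zero_or_one a with ha | ha
      · exact Or.inr ⟨rfl, Or.inl ⟨by rw [vertNbr_of_parity_eq_zero ha], ha⟩⟩
      · have hb : parity (vertNbr a) = 0 := by rw [parity_vertNbr hn, ha]; rfl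
        refine Or.inr ⟨rfl, Or.inr ⟨?_, hb⟩⟩
        conv_lhs => rw [← vertNbr_vertNbr hn a]
        rw [vertNbr_of_parity_eq_zero hb]

theorem honeyAdj_vertNbr (hn : Even n) (x : Vtx m n) : HoneyAdj m n x (vertNbr x) :=
  (honeyAdj_iff hn).2 (Or.inr (Or.inr rfl))

end Adjacency

section Incidence

variable {m n : ℕ}

def rightEdge (x : Vtx m n) : Sym2 (Vtx m n) := s(x, rightNbr x)

def leftEdge (x : Vtx m n) : Sym2 (Vtx m n) := s(x, leftNbr x)

def vertEdge (x : Vtx m n) : Sym2 (Vtx m n) := s(x, vertNbr x)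

theorem leftEdge_eq_rightEdge_leftNbr (x : Vtx m n) : leftEdge x = rightEdge (leftNbr x) := by
  rw [leftEdge, rightEdge, Sym2.eq_swap]
  congr
  exact Prod.ext (sub_add_cancel _ _).symm rfl

theorem ne_rightNbr_of_fst_eq (hm : m ≠ 1) {x y : Vtx m n} (h : x.1 = y.1) : x ≠ rightNbr y := by
  have : Nontrivial (ZMod m) := ZMod.nontrivial_iff.2 hm
  intro hxy
  simpa [rightNbr, h] using congrArg Prod.fst hxy

theorem ne_leftNbr_of_fst_eq (hm : m ≠ 1) {x y : Vtx m n} (h : x.1 = y.1) : x ≠ leftNbr y := by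
  have : Nontrivial (ZMod m) := ZMod.nontrivial_iff.2 hm
  intro hxy
  have h₁ : x.1 = y.1 - 1 := congrArg Prod.fst hxy
  rw [h] at h₁
  exact one_ne_zero (by linear_combination h₁ : (1 : ZMod m) = 0)

theorem vertNbr_snd_ne (hn : n ≠ 1) (x : Vtx m n) : (vertNbr x).2 ≠ x.2 := by
  have : Nontrivial (ZMod n) := ZMod.nontrivial_iff.2 hn
  unfold vertNbr vertDir
  split_ifs <;> simp

theorem ne_vertNbr (hn : n ≠ 1) (x : Vtx m n) : x ≠ vertNbr x :=
  fun h => vertNbr_snd_ne hn x (congrArg Prod.snd h).symm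

theorem rightNbr_ne_leftNbr (hm : 3 ≤ m) (x : Vtx m n) : rightNbr x ≠ leftNbr x := by
  intro h
  have h2 : ((2 : ℕ) : ZMod m) = 0 := by
    have := congrArg Prod.fst h
    simp only [rightNbr, leftNbr] at this
    push_cast
    linear_combination this
  have := Nat.le_of_dvd two_pos ((ZMod.natCast_eq_zero_iff 2 m).1 h2)
  omega

theorem rightEdge_ne_leftEdge (hm : 3 ≤ m) (x : Vtx m n) : rightEdge x ≠ leftEdge x :=
  fun h => rightNbr_ne_leftNbr hm x (Sym2.congr_right.1 h)

theorem rightEdge_ne_vertEdge (hm : m ≠ 1) (x : Vtx m n) : rightEdge x ≠ vertEdge x :=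
  fun h => ne_rightNbr_of_fst_eq hm (x := vertNbr x) (y := x) rfl (Sym2.congr_right.1 h).symm

theorem leftEdge_ne_vertEdge (hm : m ≠ 1) (x : Vtx m n) : leftEdge x ≠ vertEdge x :=
  fun h => ne_leftNbr_of_fst_eq hm (x := vertNbr x) (y := x) rfl (Sym2.congr_right.1 h).symm

variable [NeZero m] [NeZero n]

theorem eq_nbrEdge_of_mem_honeyEdges (hn : Even n) {e : Sym2 (Vtx m n)}
    (he : e ∈ honeyEdges m n) {a : Vtx m n} (ha : a ∈ e) :
    e = rightEdge a ∨ e = leftEdge a ∨ e = vertEdge a := by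
  obtain ⟨⟨p, q⟩, hpq, rfl⟩ := Finset.mem_image.1 he
  have hadj : HoneyAdj m n p q := (Finset.mem_filter.1 hpq).2
  rcases Sym2.mem_iff.1 ha with rfl | rfl
  · rcases (honeyAdj_iff hn).1 hadj with rfl | rfl | rfl <;> simp [rightEdge, leftEdge, vertEdge]
  · rw [Sym2.eq_swap]
    rcases (honeyAdj_iff hn).1 (honeyAdj_comm.1 hadj) with rfl | rfl | rfl <;>
      simp [rightEdge, leftEdge, vertEdge]

theorem bdeg_eq (hm : 3 ≤ m) (hn : Even n) {A : Finset (Sym2 (Vtx m n))}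
    (hA : A ⊆ honeyEdges m n) (x : Vtx m n) :
    bdeg m n A x = (if rightEdge x ∈ A then 1 else 0) + (if leftEdge x ∈ A then 1 else 0) +
      (if vertEdge x ∈ A then 1 else 0) := by
  have hfilter : A.filter (x ∈ ·) =
      ({rightEdge x, leftEdge x, vertEdge x} : Finset _).filter (· ∈ A) := by
    ext e
    simp only [Finset.mem_filter, Finset.mem_insert, Finset.mem_singleton]
    constructor
    · rintro ⟨he, hx⟩
      exact ⟨eq_nbrEdge_of_mem_honeyEdges hn (hA he) hx, he⟩
    · rintro ⟨rfl | rfl | rfl, he⟩ <;> exact ⟨he, Sym2.mem_mk_left _ _⟩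
  rw [bdeg, hfilter, Finset.card_filter, Finset.sum_insert, Finset.sum_insert,
    Finset.sum_singleton, add_assoc]
  · simpa using leftEdge_ne_vertEdge (by omega) x
  · simpa using ⟨rightEdge_ne_leftEdge hm x, rightEdge_ne_vertEdge (by omega) x⟩

end Incidence

section Configurations

variable {m n : ℕ} [NeZero m] [NeZero n]

theorem exists_mem_parity_eq (hm : Even m) (hn : Even n) {e : Sym2 (Vtx m n)}
    (he : e ∈ honeyEdges m n) (p : ZMod 2) : ∃ a ∈ e, parity a = p := by
  obtain ⟨⟨a, b⟩, hab, rfl⟩ := Finset.mem_image.1 he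
  have hadj : HoneyAdj m n a b := (Finset.mem_filter.1 hab).2
  have hb : parity b = parity a + 1 := by
    rcases (honeyAdj_iff hn).1 hadj with rfl | rfl | rfl
    exacts [parity_rightNbr hm a, parity_leftNbr hm a, parity_vertNbr hn a]
  by_cases ha : parity a = p
  · exact ⟨a, Sym2.mem_mk_left a b, ha⟩
  · refine ⟨b, Sym2.mem_mk_right a b, ?_⟩
    rw [hb]
    generalize parity a = q at ha
    revert q p
    decide

theorem mem_closure_of_parity_eq_zero {δ : ZMod n} (hδ : δ = 1 ∨ δ = -1)
    {y : Vtx m n} (hy : parity y = 0) :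
    y ∈ AddSubgroup.closure {((1 : ZMod m), δ), (-1, δ)} := by
  set H := AddSubgroup.closure {((1 : ZMod m), δ), (-1, δ)}
  have hg₁ : ((1 : ZMod m), δ) ∈ H := AddSubgroup.subset_closure (by simp)
  have hg₂ : ((-1 : ZMod m), δ) ∈ H := AddSubgroup.subset_closure (by simp)
  have h₀₂ : ((0 : ZMod m), (2 : ZMod n)) ∈ H := by
    rcases hδ with rfl | rfl
    · convert add_mem hg₁ hg₂ using 1
      ext <;> simp only [Prod.fst_add, Prod.snd_add] <;> ring
    · convert neg_mem (add_mem hg₁ hg₂) using 1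
      ext <;> simp only [Prod.fst_add, Prod.snd_add, Prod.fst_neg, Prod.snd_neg] <;> ring
  have h₁₁ : ((1 : ZMod m), (1 : ZMod n)) ∈ H := by
    rcases hδ with rfl | rfl
    · exact hg₁
    · convert add_mem hg₁ h₀₂ using 1
      ext <;> simp only [Prod.fst_add, Prod.snd_add] <;> ring
  obtain ⟨r, hr⟩ := (parity_eq_zero_iff y).1 hy
  have hdecomp : y = (y.1.val : ℤ) • ((1 : ZMod m), (1 : ZMod n)) +
      ((r : ℤ) - y.1.val) • ((0 : ZMod m), (2 : ZMod n)) := by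
    refine Prod.ext (by simp) ?_
    have hy₂ : (y.2.val : ZMod n) = r + r - y.1.val := by
      rw [← Nat.cast_add, ← hr]
      push_cast
      ring
    simp only [Prod.snd_add, Prod.smul_snd]
    simp only [zsmul_eq_mul, Int.cast_natCast, mul_one, Int.cast_sub]
    rw [ZMod.natCast_zmod_val] at hy₂
    rw [hy₂]
    ring
  rw [hdecomp]
  exact add_mem (AddSubgroup.zsmul_mem H h₁₁ _) (AddSubgroup.zsmul_mem H h₀₂ _)

theorem rightEdge_mem_Hconfig (x : Vtx m n) : rightEdge x ∈ Hconfig m n :=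
  Finset.mem_image_of_mem _ (Finset.mem_univ x)

theorem vertEdge_not_mem_Hconfig (hn : n ≠ 1) (x : Vtx m n) : vertEdge x ∉ Hconfig m n := by
  intro h
  obtain ⟨p, -, hp⟩ := Finset.mem_image.1 h
  rcases Sym2.eq_iff.1 hp with ⟨rfl, h₂⟩ | ⟨rfl, h₂⟩
  · exact vertNbr_snd_ne hn p (congrArg Prod.snd h₂).symm
  · exact vertNbr_snd_ne hn x (by simpa [rightNbr] using congrArg Prod.snd h₂)

theorem Hconfig_subset : Hconfig m n ⊆ honeyEdges m n := fun _ he =>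
  let ⟨x, _, hx⟩ := Finset.mem_image.1 he
  hx ▸ mem_honeyEdges (honeyAdj_rightNbr x)

theorem eq_Hconfig_of_forall_parity_eq (hm : Even m) (hn : Even n) {A : Finset (Sym2 (Vtx m n))}
    (hA : A ⊆ honeyEdges m n) (p : ZMod 2)
    (h : ∀ a, parity a = p → rightEdge a ∈ A ∧ leftEdge a ∈ A ∧ vertEdge a ∉ A) :
    A = Hconfig m n := by
  have hn1 : n ≠ 1 := by rintro rfl; exact Nat.not_even_one hn
  ext e
  by_cases he : e ∈ honeyEdges m n
  · obtain ⟨a, ha, hpa⟩ := exists_mem_parity_eq hm hn he p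
    obtain ⟨hR, hL, hV⟩ := h a hpa
    rcases eq_nbrEdge_of_mem_honeyEdges hn he ha with rfl | rfl | rfl
    · exact iff_of_true hR (rightEdge_mem_Hconfig a)
    · rw [leftEdge_eq_rightEdge_leftNbr] at hL ⊢
      exact iff_of_true hL (rightEdge_mem_Hconfig _)
    · exact iff_of_false hV (vertEdge_not_mem_Hconfig hn1 a)
  · exact iff_of_false (fun h => he (hA h)) (fun h => he (Hconfig_subset h))

end Configurations

section Transience

variable {m n : ℕ} [NeZero m] [NeZero n] {st : WormState m n} {x : Vtx m n}

theorem ReachesMergedAt.isWormState (h : ReachesMergedAt st x) (y : Vtx m n) :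
    IsWormState m n st.1.1 y y :=
  let ⟨_, ht, _⟩ := h
  (isWormState_of_val_eq ht).merged y

theorem IsWormState.bdeg_eq_two_of_mem (hm : 3 ≤ m) (hn : Even n) {A : Finset (Sym2 (Vtx m n))}
    {a : Vtx m n} (h : IsWormState m n A a a) {e : Sym2 (Vtx m n)} (he : e ∈ A) (hx : x ∈ e) :
    bdeg m n A x = 2 := by
  have hpos : 0 < bdeg m n A x := Finset.card_pos.2 ⟨e, Finset.mem_filter.2 ⟨he, hx⟩⟩
  have heven : ¬Odd (bdeg m n A x) := fun ho => ((h.2 x).1 ho).2 rfl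
  have hle := bdeg_eq hm hn h.1 x
  rw [Nat.not_odd_iff_even, Nat.even_iff] at heven
  split_ifs at hle <;> omega

def ReachableRightEdgesOccupied (st : WormState m n) : Prop :=
  ∀ y, ReachesMergedAt st y → rightEdge y ∈ st.1.1

theorem ReachableRightEdgesOccupied.leftEdge_mem (hst : ReachableRightEdgesOccupied st)
    (hm : m ≠ 1) (hx : ReachesMergedAt st x) (hdeg : bdeg m n st.1.1 x = 2) :
    leftEdge x ∈ st.1.1 := by
  by_contra hL
  have hreach := hx.hop hdeg (honeyAdj_leftNbr x) (ne_leftNbr_of_fst_eq hm rfl) hL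
  exact hL (leftEdge_eq_rightEdge_leftNbr x ▸ hst _ hreach)

theorem ReachableRightEdgesOccupied.vertEdge_not_mem (hst : ReachableRightEdgesOccupied st)
    (hm : 3 ≤ m) (hn : Even n) (hx : ReachesMergedAt st x) (hdeg : bdeg m n st.1.1 x = 2) :
    vertEdge x ∉ st.1.1 := by
  intro hV
  have h := bdeg_eq hm hn (hx.isWormState x).1 x
  rw [if_pos (hst x hx), if_pos (hst.leftEdge_mem (by omega) hx hdeg),
    if_pos hV, hdeg] at h
  omega

theorem ReachableRightEdgesOccupied.reachesMergedAt_vertNbr (hst : ReachableRightEdgesOccupied st)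
    (hm : 3 ≤ m) (hn : Even n) (hx : ReachesMergedAt st x) (hdeg : bdeg m n st.1.1 x = 2) :
    ReachesMergedAt st (vertNbr x) ∧ bdeg m n st.1.1 (vertNbr x) = 2 := by
  have hn1 : n ≠ 1 := by rintro rfl; exact Nat.not_even_one hn
  have hw := hx.hop hdeg (honeyAdj_vertNbr hn x) (ne_vertNbr hn1 x)
    (hst.vertEdge_not_mem hm hn hx hdeg)
  exact ⟨hw, (hw.isWormState x).bdeg_eq_two_of_mem hm hn (hst _ hw) (Sym2.mem_mk_left _ _)⟩

theorem ReachableRightEdgesOccupied.reachesMergedAt_add (hst : ReachableRightEdgesOccupied st)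
    (hm : 3 ≤ m) (hn : Even n) (hx : ReachesMergedAt st x) (hdeg : bdeg m n st.1.1 x = 2)
    {g : Vtx m n} (hg : g = (1, vertDir x) ∨ g = (-1, vertDir x)) :
    ReachesMergedAt st (x + g) ∧ bdeg m n st.1.1 (x + g) = 2 := by
  have hm1 : m ≠ 1 := by omega
  set w := vertNbr x
  obtain ⟨hw, hwdeg⟩ := hst.reachesMergedAt_vertNbr hm hn hx hdeg
  have hV := hst.vertEdge_not_mem hm hn hx hdeg
  have hA := hw.isWormState x
  have hn1 : n ≠ 1 := by rintro rfl; exact Nat.not_even_one hn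
  have hxw : x ≠ w := ne_vertNbr hn1 x
  rcases hg with rfl | rfl
  · have hR := hst w hw
    refine (show x + (1, vertDir x) = rightNbr w from rfl) ▸
      ⟨hx.slide hdeg hwdeg (honeyAdj_vertNbr hn x) (honeyAdj_rightNbr w) hxw
        (ne_rightNbr_of_fst_eq hm1 rfl) (ne_rightNbr_of_fst_eq hm1 rfl) hV hR,
        hA.bdeg_eq_two_of_mem hm hn hR (Sym2.mem_mk_right _ _)⟩
  · have hL := hst.leftEdge_mem hm1 hw hwdeg
    refine (show x + (-1, vertDir x) = leftNbr w from Prod.ext (sub_eq_add_neg _ _).symm rfl) ▸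
      ⟨hx.slide hdeg hwdeg (honeyAdj_vertNbr hn x) (honeyAdj_leftNbr w) hxw
        (ne_leftNbr_of_fst_eq hm1 rfl) (ne_leftNbr_of_fst_eq hm1 rfl) hV hL,
        hA.bdeg_eq_two_of_mem hm hn hL (Sym2.mem_mk_right _ _)⟩

theorem ReachableRightEdgesOccupied.reachesMergedAt_of_parity_eq
    (hst : ReachableRightEdgesOccupied st) (hm : Even m) (hm3 : 3 ≤ m) (hn : Even n)
    {u : Vtx m n} (hu : ReachesMergedAt st u) (hdeg : bdeg m n st.1.1 u = 2) {y : Vtx m n}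
    (hy : parity y = parity u) : ReachesMergedAt st y ∧ bdeg m n st.1.1 y = 2 := by
  let P : Vtx m n → Prop := fun x =>
    parity x = parity u ∧ ReachesMergedAt st x ∧ bdeg m n st.1.1 x = 2
  have hP : ∀ x, P x → ∀ g ∈ ({(1, vertDir u), (-1, vertDir u)} : Set (Vtx m n)), P (x + g) := by
    rintro x ⟨hpx, hx, hxdeg⟩ g hg
    have hdir : vertDir x = vertDir u := by simp only [vertDir, hpx]
    have hpg : parity g = 0 := by
      rcases hg with rfl | rfl <;>
        simp [parity, cast_vertDir hn, ZMod.cast_one hm.two_dvd, ZMod.cast_neg hm.two_dvd] <;> rfl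
    refine ⟨by rw [parity_add hm hn, hpx, hpg, add_zero], ?_⟩
    exact hst.reachesMergedAt_add hm3 hn hx hxdeg (by rwa [hdir])
  have hyu : parity (y - u) = 0 := by
    have h := parity_add hm hn (y - u) u
    rw [sub_add_cancel, hy] at h
    exact add_eq_right.1 h.symm
  have h := AddSubgroup.closure_induction_add_right_of_finite hP ⟨rfl, hu, hdeg⟩
    (mem_closure_of_parity_eq_zero (vertDir_eq_one_or_neg_one u) hyu)
  rw [add_sub_cancel] at h
  exact h.2

end Transience

theorem transient_lemma_general (m n : ℕ) [NeZero m] [NeZero n]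
    (hm : Even m) (hn : Even n) (hm4 : 4 ≤ m)
    (st : WormState m n) (u : Vtx m n) (hst : st.1.2 = (u, u))
    (hdeg : bdeg m n st.1.1 u = 2) (hne : st.1.1 ≠ Hconfig m n) :
    ∃ v v' : Vtx m n, v'.2 = v.2 ∧ v'.1 = v.1 + 1 ∧ s(v, v') ∉ st.1.1 ∧
      ∃ t1 : WormState m n, t1.1 = (st.1.1, v, v) ∧ Reaches m n st t1 := by
  have hm3 : 3 ≤ m := by omega
  by_contra hcon
  have hocc : ReachableRightEdgesOccupied st := by
    rintro x ⟨t, ht, hreach⟩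
    by_contra hx
    exact hcon ⟨x, rightNbr x, rfl, rfl, hx, t, ht, hreach⟩
  have hu := reachesMergedAt_self hst
  refine hne (eq_Hconfig_of_forall_parity_eq hm hn st.2.1 (parity u) fun a ha => ?_)
  obtain ⟨ha, hadeg⟩ := hocc.reachesMergedAt_of_parity_eq hm hm3 hn hu hdeg ha
  exact ⟨hocc a ha, hocc.leftEdge_mem (by omega) ha hadeg, hocc.vertEdge_not_mem hm3 hn ha hadeg⟩

theorem transient_lemma (m n : ℕ) [NeZero m] [NeZero n]
    (hm : Even m) (hn : Even n) (hm4 : 4 ≤ m) (hn4 : 4 ≤ n)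
    (st : WormState m n) (u : Vtx m n) (hst : st.1.2 = (u, u))
    (hdeg : bdeg m n st.1.1 u = 2) (hne : st.1.1 ≠ Hconfig m n) :
    ∃ v v' : Vtx m n, v'.2 = v.2 ∧ v'.1 = v.1 + 1 ∧ s(v, v') ∉ st.1.1 ∧
      ∃ t1 : WormState m n, t1.1 = (st.1.1, v, v) ∧ Reaches m n st t1 :=
  transient_lemma_general m n hm hn hm4 st u hst hdeg hne

end FPL
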